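/- If (A♮_R B, α⊗β, σ) is a cobraided R-smash product Hom-Hopf algebra, then φ(a,b)=σ(a⊗1_B, 1_A⊗b) defines a Hom-skew pairing (A,B,φ), and ψ(b,a)=σ(1_A⊗b, a⊗1_B) defines a Hom-skew pairing (B,A,ψ). -/
import Mathlib


open TensorProduct

noncomputable section

namespace HomPaper

variable (K : Type) [Field K]
variable {A B C D H M : Type}
variable [AddCommGroup A] [Module K A] [AddCommGroup B] [Module K B]
variable [AddCommGroup C] [Module K C] [AddCommGroup D] [Module K D]
variable [AddCommGroup H] [Module K H] [AddCommGroup M] [Module K M]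

/-- `pairT f g t` pairs a tensor `t = Σ x ⊗ y` against two functionals: `Σ f x * g y`. -/
def pairT (f : A →ₗ[K] K) (g : B →ₗ[K] K) : A ⊗[K] B →ₗ[K] K :=
  (TensorProduct.lid K K).toLinearMap ∘ₗ TensorProduct.map f g

/-- `contract4 p q` sends `(a ⊗ b, c ⊗ d)` to `p a c * q b d` (with implicit summation). -/
def contract4 (p : A →ₗ[K] C →ₗ[K] K) (q : B →ₗ[K] D →ₗ[K] K) :
    A ⊗[K] B →ₗ[K] C ⊗[K] D →ₗ[K] K :=
  TensorProduct.curry ((TensorProduct.lid K K).toLinearMap ∘ₗ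
    TensorProduct.map (TensorProduct.lift p) (TensorProduct.lift q) ∘ₗ
    (TensorProduct.tensorTensorTensorComm K A B C D).toLinearMap)

/-- componentwise multiplication on a tensor product of two algebras:
`(a ⊗ b)(a' ⊗ b') = aa' ⊗ bb'`. -/
def tmul2 (mA : A →ₗ[K] A →ₗ[K] A) (mB : B →ₗ[K] B →ₗ[K] B) :
    A ⊗[K] B →ₗ[K] A ⊗[K] B →ₗ[K] A ⊗[K] B :=
  TensorProduct.curry ((TensorProduct.map (TensorProduct.lift mA) (TensorProduct.lift mB)) ∘ₗ
    (TensorProduct.tensorTensorTensorComm K A B A B).toLinearMap)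

/-- the tensor product comultiplication `Δ(c ⊗ d) = (c₁ ⊗ d₁) ⊗ (c₂ ⊗ d₂)`. -/
def tcomul (dA : A →ₗ[K] A ⊗[K] A) (dB : B →ₗ[K] B ⊗[K] B) :
    A ⊗[K] B →ₗ[K] (A ⊗[K] B) ⊗[K] (A ⊗[K] B) :=
  (TensorProduct.tensorTensorTensorComm K A A B B).toLinearMap ∘ₗ TensorProduct.map dA dB

/-- the tensor product counit `ε(c ⊗ d) = ε(c)ε(d)`. -/
def tcounit (eA : A →ₗ[K] K) (eB : B →ₗ[K] K) : A ⊗[K] B →ₗ[K] K := pairT K eA eB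

/-- The `R`-smash product multiplication
`(a ⊗ b)(a' ⊗ b') = a·α⁻¹(a')_R ⊗ β⁻¹(b_R)·b'`, where `R(b ⊗ a) = a_R ⊗ b_R`. -/
def smashMul (mA : A →ₗ[K] A →ₗ[K] A) (mB : B →ₗ[K] B →ₗ[K] B)
    (α : A ≃ₗ[K] A) (β : B ≃ₗ[K] B) (R : B ⊗[K] A →ₗ[K] A ⊗[K] B) :
    A ⊗[K] B →ₗ[K] A ⊗[K] B →ₗ[K] A ⊗[K] B :=
  TensorProduct.curry
    ((TensorProduct.map (TensorProduct.lift mA) (TensorProduct.lift mB)) ∘ₗ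
     (TensorProduct.assoc K A A (B ⊗[K] B)).symm.toLinearMap ∘ₗ
     (TensorProduct.map LinearMap.id (TensorProduct.assoc K A B B).toLinearMap) ∘ₗ
     (TensorProduct.map LinearMap.id (TensorProduct.map
        ((TensorProduct.map LinearMap.id β.symm.toLinearMap) ∘ₗ R ∘ₗ
         (TensorProduct.map LinearMap.id α.symm.toLinearMap)) LinearMap.id)) ∘ₗ
     (TensorProduct.map LinearMap.id (TensorProduct.assoc K B A B).symm.toLinearMap) ∘ₗ
     (TensorProduct.assoc K A B (A ⊗[K] B)).toLinearMap)

/-- The antipode of the `R`-smash product: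
`S̄(a ⊗ b) = α⁻¹(S_A(a))_R ⊗ β⁻¹(S_B(b)_R)`. -/
def smashS (α : A ≃ₗ[K] A) (β : B ≃ₗ[K] B) (SA : A →ₗ[K] A) (SB : B →ₗ[K] B)
    (R : B ⊗[K] A →ₗ[K] A ⊗[K] B) : A ⊗[K] B →ₗ[K] A ⊗[K] B :=
  (TensorProduct.map LinearMap.id β.symm.toLinearMap) ∘ₗ R ∘ₗ
  (TensorProduct.map SB (α.symm.toLinearMap ∘ₗ SA)) ∘ₗ (TensorProduct.comm K A B).toLinearMap

/-- the twisting condition (4): `R(β(b) ⊗ α(a)) = (α ⊗ β)(R(b ⊗ a))`. -/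
def RTwist (α : A ≃ₗ[K] A) (β : B ≃ₗ[K] B) (R : B ⊗[K] A →ₗ[K] A ⊗[K] B) : Prop :=
  ∀ (a : A) (b : B),
    R (β b ⊗ₜ[K] α a) = TensorProduct.map α.toLinearMap β.toLinearMap (R (b ⊗ₜ[K] a))

/-- condition (C1): `a_R ⊗ (1_B)_R = α(a) ⊗ 1_B` and `(1_A)_R ⊗ b_R = 1_A ⊗ β(b)`. -/
def RC1 (oneA : A) (oneB : B) (α : A ≃ₗ[K] A) (β : B ≃ₗ[K] B)
    (R : B ⊗[K] A →ₗ[K] A ⊗[K] B) : Prop :=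
  (∀ a : A, R (oneB ⊗ₜ[K] a) = α a ⊗ₜ[K] oneB) ∧
  (∀ b : B, R (b ⊗ₜ[K] oneA) = oneA ⊗ₜ[K] β b)

/-- condition (C2): `α(a)_R ⊗ (bb')_R = a_{Rr} ⊗ β⁻¹(β(b)_r)b'_R`. -/
def RC2 (mB : B →ₗ[K] B →ₗ[K] B) (α : A ≃ₗ[K] A) (β : B ≃ₗ[K] B)
    (R : B ⊗[K] A →ₗ[K] A ⊗[K] B) : Prop :=
  ∀ (a : A) (b b' : B),
    R (mB b b' ⊗ₜ[K] α a) =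
      ((TensorProduct.map LinearMap.id (TensorProduct.lift mB)) ∘ₗ
       (TensorProduct.assoc K A B B).toLinearMap ∘ₗ
       (TensorProduct.map (TensorProduct.map LinearMap.id β.symm.toLinearMap) LinearMap.id) ∘ₗ
       (TensorProduct.map (R ∘ₗ TensorProduct.mk K B A (β b)) LinearMap.id))
        (R (b' ⊗ₜ[K] a))

/-- condition (C3): `α((aa')_R) ⊗ β(b)_R = α(a_R)·α(a')_r ⊗ b_{Rr}`. -/
def RC3 (mA : A →ₗ[K] A →ₗ[K] A) (α : A ≃ₗ[K] A) (β : B ≃ₗ[K] B)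
    (R : B ⊗[K] A →ₗ[K] A ⊗[K] B) : Prop :=
  ∀ (a a' : A) (b : B),
    TensorProduct.map α.toLinearMap LinearMap.id (R (β b ⊗ₜ[K] mA a a')) =
      ((TensorProduct.map (TensorProduct.lift mA) LinearMap.id) ∘ₗ
       (TensorProduct.assoc K A A B).symm.toLinearMap ∘ₗ
       (TensorProduct.map α.toLinearMap (R ∘ₗ (TensorProduct.mk K B A).flip (α a'))))
        (R (b ⊗ₜ[K] a))

/-- A Hom-algebra: `α` multiplicative and unital, Hom-associativity, Hom-unitality. -/
structure IsHomAlgebra (mul : A →ₗ[K] A →ₗ[K] A) (one : A) (α : A ≃ₗ[K] A) : Prop where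
  map_mul : ∀ a b : A, α (mul a b) = mul (α a) (α b)
  map_one : α one = one
  hom_assoc : ∀ a b c : A, mul (α a) (mul b c) = mul (mul a b) (α c)
  mul_one : ∀ a : A, mul a one = α a
  one_mul : ∀ a : A, mul one a = α a

/-- A Hom-coalgebra: `Δ∘α = (α⊗α)∘Δ`, `ε∘α = ε`, Hom-coassociativity
`α(c₁) ⊗ c₂₁ ⊗ c₂₂ = c₁₁ ⊗ c₁₂ ⊗ α(c₂)`, and counit identities `ε(c₁)c₂ = c₁ε(c₂) = α(c)`. -/
structure IsHomCoalgebra (comul : C →ₗ[K] C ⊗[K] C) (counit : C →ₗ[K] K)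
    (α : C ≃ₗ[K] C) : Prop where
  comul_map : ∀ c : C,
    comul (α c) = TensorProduct.map α.toLinearMap α.toLinearMap (comul c)
  counit_map : ∀ c : C, counit (α c) = counit c
  hom_coassoc : ∀ c : C,
    TensorProduct.map α.toLinearMap comul (comul c) =
      (TensorProduct.assoc K C C C) (TensorProduct.map comul α.toLinearMap (comul c))
  counit_left : ∀ c : C,
    TensorProduct.lid K C (TensorProduct.map counit LinearMap.id (comul c)) = α c
  counit_right : ∀ c : C,
    TensorProduct.rid K C (TensorProduct.map LinearMap.id counit (comul c)) = α c

/-- A Hom-bialgebra: simultaneously a Hom-algebra and Hom-coalgebra such that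
`Δ` and `ε` are morphisms of Hom-algebras. -/
structure IsHomBialgebra (mul : H →ₗ[K] H →ₗ[K] H) (one : H)
    (comul : H →ₗ[K] H ⊗[K] H) (counit : H →ₗ[K] K) (β : H ≃ₗ[K] H) : Prop where
  alg : IsHomAlgebra K mul one β
  coalg : IsHomCoalgebra K comul counit β
  comul_mul : ∀ a b : H, comul (mul a b) = tmul2 K mul mul (comul a) (comul b)
  comul_one : comul one = one ⊗ₜ[K] one
  counit_mul : ∀ a b : H, counit (mul a b) = counit a * counit b
  counit_one : counit one = 1

/-- A Hom-Hopf algebra: a Hom-bialgebra with antipode `S`: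
`S(h₁)h₂ = h₁S(h₂) = ε(h)1` and `S∘β = β∘S`. -/
structure IsHomHopf (mul : H →ₗ[K] H →ₗ[K] H) (one : H)
    (comul : H →ₗ[K] H ⊗[K] H) (counit : H →ₗ[K] K) (β : H ≃ₗ[K] H)
    (S : H →ₗ[K] H) : Prop where
  bialg : IsHomBialgebra K mul one comul counit β
  S_left : ∀ h : H,
    TensorProduct.lift mul (TensorProduct.map S LinearMap.id (comul h)) = counit h • one
  S_right : ∀ h : H,
    TensorProduct.lift mul (TensorProduct.map LinearMap.id S (comul h)) = counit h • one
  S_map : ∀ h : H, S (β h) = β (S h)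

/-- `(A,▷,α)` is an `(H,β)`-module Hom-algebra. -/
structure IsModuleHomAlgebra
    (Hmul : H →ₗ[K] H →ₗ[K] H) (Hone : H) (Hcomul : H →ₗ[K] H ⊗[K] H)
    (Hcounit : H →ₗ[K] K) (β : H ≃ₗ[K] H)
    (Amul : A →ₗ[K] A →ₗ[K] A) (Aone : A) (α : A ≃ₗ[K] A)
    (act : H →ₗ[K] A →ₗ[K] A) : Prop where
  act_map : ∀ (h : H) (a : A), α (act h a) = act (β h) (α a)
  act_act : ∀ (h h' : H) (a : A), act (β h) (act h' a) = act (Hmul h h') (α a)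
  one_act : ∀ a : A, act Hone a = α a
  act_mul : ∀ (h : H) (a a' : A),
    act (β (β h)) (Amul a a') =
      TensorProduct.lift Amul
        (TensorProduct.map (act.flip a) (act.flip a') (Hcomul h))
  act_one : ∀ h : H, act h Aone = Hcounit h • Aone

/-- the map `R(h ⊗ a) = (h₁ ▷ a) ⊗ h₂` induced by a module action. -/
def actR (Hcomul : H →ₗ[K] H ⊗[K] H) (act : H →ₗ[K] A →ₗ[K] A) :
    H ⊗[K] A →ₗ[K] A ⊗[K] H :=
  (TensorProduct.map (TensorProduct.lift act) LinearMap.id) ∘ₗ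
  (TensorProduct.assoc K H A H).symm.toLinearMap ∘ₗ
  (TensorProduct.map LinearMap.id (TensorProduct.comm K H A).toLinearMap) ∘ₗ
  (TensorProduct.assoc K H H A).toLinearMap ∘ₗ
  (TensorProduct.map Hcomul LinearMap.id)

/-- `σ` is a Hom-cobraiding form: axioms (CHA1)-(CHA5). -/
structure IsCobraiding (mul : M →ₗ[K] M →ₗ[K] M) (one : M)
    (comul : M →ₗ[K] M ⊗[K] M) (counit : M →ₗ[K] K) (γ : M ≃ₗ[K] M)
    (σ : M →ₗ[K] M →ₗ[K] K) : Prop where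
  cha1_left : ∀ x : M, σ x one = counit x
  cha1_right : ∀ x : M, σ one x = counit x
  cha2 : ∀ x y z : M, σ (mul x y) (γ z) = pairT K (σ (γ x)) (σ (γ y)) (comul z)
  cha3 : ∀ x y z : M, σ (γ x) (mul y z) = pairT K (σ.flip (γ z)) (σ.flip (γ y)) (comul x)
  cha4 : ∀ x y : M,
    ((TensorProduct.lid K M).toLinearMap ∘ₗ
      TensorProduct.map (TensorProduct.lift σ) (TensorProduct.lift mul) ∘ₗ
      (TensorProduct.tensorTensorTensorComm K M M M M).toLinearMap)
        (comul x ⊗ₜ[K] comul y) =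
    ((TensorProduct.rid K M).toLinearMap ∘ₗ
      TensorProduct.map (TensorProduct.lift mul.flip) (TensorProduct.lift σ) ∘ₗ
      (TensorProduct.tensorTensorTensorComm K M M M M).toLinearMap)
        (comul x ⊗ₜ[K] comul y)
  cha5 : ∀ x y : M, σ (γ x) (γ y) = σ x y

/-- `θ` is a Hom-skew pairing: axioms (SP1)-(SP4). -/
structure IsSkewPairing
    (Amul : A →ₗ[K] A →ₗ[K] A) (Aone : A) (Acomul : A →ₗ[K] A ⊗[K] A)
    (Acounit : A →ₗ[K] K) (α : A ≃ₗ[K] A)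
    (Bmul : B →ₗ[K] B →ₗ[K] B) (Bone : B) (Bcomul : B →ₗ[K] B ⊗[K] B)
    (Bcounit : B →ₗ[K] K) (β : B ≃ₗ[K] B)
    (θ : A →ₗ[K] B →ₗ[K] K) : Prop where
  sp1_left : ∀ a : A, θ a Bone = Acounit a
  sp1_right : ∀ b : B, θ Aone b = Bcounit b
  sp2 : ∀ (a a' : A) (b : B),
    θ (Amul a a') (β b) = pairT K (θ (α a)) (θ (α a')) (Bcomul b)
  sp3 : ∀ (a : A) (b b' : B),
    θ (α a) (Bmul b b') = pairT K (θ.flip (β b')) (θ.flip (β b)) (Acomul a)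
  sp4 : ∀ (a : A) (b : B), θ (α a) (β b) = θ a b
lemma pairT_tmul (f : A →ₗ[K] K) (g : B →ₗ[K] K) (x : A) (y : B) :
    pairT K f g (x ⊗ₜ[K] y) = f x * g y := by
  simp [pairT, smul_eq_mul]

lemma pairT_ttc_left (f g : A ⊗[K] B →ₗ[K] K) (y y' : B) (t : A ⊗[K] A) :
    pairT K f g ((TensorProduct.tensorTensorTensorComm K A A B B) (t ⊗ₜ[K] (y ⊗ₜ[K] y'))) =
    pairT K (f ∘ₗ (TensorProduct.mk K A B).flip y) (g ∘ₗ (TensorProduct.mk K A B).flip y') t := by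
  induction t using TensorProduct.induction_on with
  | zero => simp
  | tmul x x' => simp [pairT_tmul]
  | add t₁ t₂ h₁ h₂ => simp only [add_tmul, map_add, h₁, h₂]

lemma pairT_ttc_right (f g : A ⊗[K] B →ₗ[K] K) (x x' : A) (t : B ⊗[K] B) :
    pairT K f g ((TensorProduct.tensorTensorTensorComm K A A B B) ((x ⊗ₜ[K] x') ⊗ₜ[K] t)) =
    pairT K (f ∘ₗ TensorProduct.mk K A B x) (g ∘ₗ TensorProduct.mk K A B x') t := by
  induction t using TensorProduct.induction_on with
  | zero => simp
  | tmul y y' => simp [pairT_tmul]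
  | add t₁ t₂ h₁ h₂ => simp only [tmul_add, map_add, h₁, h₂]

/-- the restrictions `φ = σ∘(i⊗j)` and `ψ = σ∘(j⊗i)` of a cobraiding on an
R-smash product are Hom-skew pairings `(A,B,φ)` and `(B,A,ψ)`. -/
theorem rsmash_cobraiding_skewPairings
    (mA : A →ₗ[K] A →ₗ[K] A) (oneA : A) (dA : A →ₗ[K] A ⊗[K] A) (eA : A →ₗ[K] K)
    (α : A ≃ₗ[K] A) (SA : A →ₗ[K] A)
    (mB : B →ₗ[K] B →ₗ[K] B) (oneB : B) (dB : B →ₗ[K] B ⊗[K] B) (eB : B →ₗ[K] K)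
    (β : B ≃ₗ[K] B) (SB : B →ₗ[K] B)
    (hA : IsHomHopf K mA oneA dA eA α SA) (hB : IsHomHopf K mB oneB dB eB β SB)
    (R : B ⊗[K] A →ₗ[K] A ⊗[K] B)
    (hR : RTwist K α β R) (hc1 : RC1 K oneA oneB α β R)
    (hc2 : RC2 K mB α β R) (hc3 : RC3 K mA α β R)
    (hRcomul : ∀ (a : A) (b : B),
      tcomul K dA dB (R (b ⊗ₜ[K] a)) =
        TensorProduct.map R R (tcomul K dB dA (b ⊗ₜ[K] a)))
    (hRcounit : ∀ (a : A) (b : B),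
      tcounit K eA eB (R (b ⊗ₜ[K] a)) = eA a * eB b)
    (σ : (A ⊗[K] B) →ₗ[K] (A ⊗[K] B) →ₗ[K] K)
    (hσ : IsCobraiding K (smashMul K mA mB α β R) (oneA ⊗ₜ[K] oneB)
      (tcomul K dA dB) (tcounit K eA eB) (TensorProduct.congr α β) σ) :
    IsSkewPairing K mA oneA dA eA α mB oneB dB eB β
      ((σ ∘ₗ (TensorProduct.mk K A B).flip oneB).compl₂ (TensorProduct.mk K A B oneA)) ∧
    IsSkewPairing K mB oneB dB eB β mA oneA dA eA α
      ((σ ∘ₗ TensorProduct.mk K A B oneA).compl₂ ((TensorProduct.mk K A B).flip oneB)) := by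
  have hα1 : α oneA = oneA := hA.bialg.alg.map_one
  have hβ1 : β oneB = oneB := hB.bialg.alg.map_one
  have hαs1 : α.symm oneA = oneA := by
    conv_lhs => rw [← hα1]
    exact α.symm_apply_apply oneA
  have hβs1 : β.symm oneB = oneB := by
    conv_lhs => rw [← hβ1]
    exact β.symm_apply_apply oneB
  have hmA11 : mA oneA oneA = oneA := by rw [hA.bialg.alg.mul_one, hα1]
  have hmB11 : mB oneB oneB = oneB := by rw [hB.bialg.alg.mul_one, hβ1]
  -- smash product multiplication on the two subalgebras
  have mulAA : ∀ a a' : A,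
      smashMul K mA mB α β R (a ⊗ₜ[K] oneB) (a' ⊗ₜ[K] oneB) = mA a a' ⊗ₜ[K] oneB := by
    intro a a'
    simp only [smashMul, TensorProduct.curry_apply, LinearMap.comp_apply,
      LinearEquiv.coe_coe, TensorProduct.assoc_tmul, TensorProduct.map_tmul,
      LinearMap.id_coe, id_eq, TensorProduct.assoc_symm_tmul]
    rw [hc1.1 (α.symm a')]
    simp only [TensorProduct.map_tmul, LinearMap.id_coe, id_eq, LinearEquiv.coe_coe,
      α.apply_symm_apply, hβs1, TensorProduct.assoc_tmul, TensorProduct.assoc_symm_tmul,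
      TensorProduct.lift.tmul, hmB11]
  have mulBB : ∀ b b' : B,
      smashMul K mA mB α β R (oneA ⊗ₜ[K] b) (oneA ⊗ₜ[K] b') = oneA ⊗ₜ[K] mB b b' := by
    intro b b'
    simp only [smashMul, TensorProduct.curry_apply, LinearMap.comp_apply,
      LinearEquiv.coe_coe, TensorProduct.assoc_tmul, TensorProduct.map_tmul,
      LinearMap.id_coe, id_eq, TensorProduct.assoc_symm_tmul, hαs1]
    rw [hc1.2 b]
    simp only [TensorProduct.map_tmul, LinearMap.id_coe, id_eq, LinearEquiv.coe_coe,
      β.symm_apply_apply, TensorProduct.assoc_tmul, TensorProduct.assoc_symm_tmul,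
      TensorProduct.lift.tmul, hmA11]
  -- γ on the two subalgebras
  have γA : ∀ a : A, TensorProduct.congr α β (a ⊗ₜ[K] oneB) = α a ⊗ₜ[K] oneB := by
    intro a; simp [TensorProduct.congr_tmul, hβ1]
  have γB : ∀ b : B, TensorProduct.congr α β (oneA ⊗ₜ[K] b) = oneA ⊗ₜ[K] β b := by
    intro b; simp [TensorProduct.congr_tmul, hα1]
  -- comultiplication on the two subalgebras
  have dAB : ∀ a : A, tcomul K dA dB (a ⊗ₜ[K] oneB) =
      (TensorProduct.tensorTensorTensorComm K A A B B) (dA a ⊗ₜ[K] (oneB ⊗ₜ[K] oneB)) := by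
    intro a
    simp [tcomul, hB.bialg.comul_one]
  have dBA : ∀ b : B, tcomul K dA dB (oneA ⊗ₜ[K] b) =
      (TensorProduct.tensorTensorTensorComm K A A B B) ((oneA ⊗ₜ[K] oneA) ⊗ₜ[K] dB b) := by
    intro b
    simp [tcomul, hA.bialg.comul_one]
  -- counit on the two subalgebras
  have eAB : ∀ a : A, tcounit K eA eB (a ⊗ₜ[K] oneB) = eA a := by
    intro a; rw [tcounit, pairT_tmul, hB.bialg.counit_one, mul_one]
  have eBA : ∀ b : B, tcounit K eA eB (oneA ⊗ₜ[K] b) = eB b := by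
    intro b; rw [tcounit, pairT_tmul, hA.bialg.counit_one, one_mul]
  set φ := ((σ ∘ₗ (TensorProduct.mk K A B).flip oneB).compl₂ (TensorProduct.mk K A B oneA))
    with hφ
  set ψ := ((σ ∘ₗ TensorProduct.mk K A B oneA).compl₂ ((TensorProduct.mk K A B).flip oneB))
    with hψ
  have φap : ∀ (a : A) (b : B), φ a b = σ (a ⊗ₜ[K] oneB) (oneA ⊗ₜ[K] b) := fun _ _ => rfl
  have ψap : ∀ (b : B) (a : A), ψ b a = σ (oneA ⊗ₜ[K] b) (a ⊗ₜ[K] oneB) := fun _ _ => rfl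
  have φcomp : ∀ a : A, φ a = σ (a ⊗ₜ[K] oneB) ∘ₗ TensorProduct.mk K A B oneA :=
    fun _ => rfl
  have φflip : ∀ b : B,
      φ.flip b = σ.flip (oneA ⊗ₜ[K] b) ∘ₗ (TensorProduct.mk K A B).flip oneB := by
    intro b; ext a; rfl
  have ψcomp : ∀ b : B, ψ b = σ (oneA ⊗ₜ[K] b) ∘ₗ (TensorProduct.mk K A B).flip oneB :=
    fun _ => rfl
  have ψflip : ∀ a : A,
      ψ.flip a = σ.flip (a ⊗ₜ[K] oneB) ∘ₗ TensorProduct.mk K A B oneA := by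
    intro a; ext b; rfl
  constructor
  · refine ⟨?_, ?_, ?_, ?_, ?_⟩
    · intro a
      rw [φap, ← eAB a]
      exact hσ.cha1_left (a ⊗ₜ[K] oneB)
    · intro b
      rw [φap, ← eBA b]
      exact hσ.cha1_right (oneA ⊗ₜ[K] b)
    · intro a a' b
      have h := hσ.cha2 (a ⊗ₜ[K] oneB) (a' ⊗ₜ[K] oneB) (oneA ⊗ₜ[K] b)
      rw [mulAA, γB, γA, γA, dBA, pairT_ttc_right] at h
      rw [φap, h, φcomp, φcomp]
    · intro a b b'
      have h := hσ.cha3 (a ⊗ₜ[K] oneB) (oneA ⊗ₜ[K] b) (oneA ⊗ₜ[K] b')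
      rw [mulBB, γA, γB, γB, dAB, pairT_ttc_left] at h
      rw [φap, h, φflip, φflip]
    · intro a b
      have h := hσ.cha5 (a ⊗ₜ[K] oneB) (oneA ⊗ₜ[K] b)
      rw [γA, γB] at h
      rw [φap, φap, h]
  · refine ⟨?_, ?_, ?_, ?_, ?_⟩
    · intro b
      rw [ψap, ← eBA b]
      exact hσ.cha1_left (oneA ⊗ₜ[K] b)
    · intro a
      rw [ψap, ← eAB a]
      exact hσ.cha1_right (a ⊗ₜ[K] oneB)
    · intro b b' a
      have h := hσ.cha2 (oneA ⊗ₜ[K] b) (oneA ⊗ₜ[K] b') (a ⊗ₜ[K] oneB)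
      rw [mulBB, γA, γB, γB, dAB, pairT_ttc_left] at h
      rw [ψap, h, ψcomp, ψcomp]
    · intro b a a'
      have h := hσ.cha3 (oneA ⊗ₜ[K] b) (a ⊗ₜ[K] oneB) (a' ⊗ₜ[K] oneB)
      rw [mulAA, γB, γA, γA, dBA, pairT_ttc_right] at h
      rw [ψap, h, ψflip, ψflip]
    · intro b a
      have h := hσ.cha5 (oneA ⊗ₜ[K] b) (a ⊗ₜ[K] oneB)
      rw [γB, γA] at h
      rw [ψap, ψap, h]

end HomPaper
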